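/- The function f(p) = −p log₂(p/(p+q)) − q log₂(q/(p+q)) − r log₂(r/(r+s)) − s log₂(s/(r+s)), where p = x₁x₂, q = (1−x₁)(1−x₂), r = x₁(1−x₂), s = (1−x₁)x₂ for x₁, x₂ ∈ [0,1], satisfies f ≤ 1 with equality at x₁ = x₂ = 1/2, and f = 0 whenever x₁ ∈ {0,1} or x₂ ∈ {0,1}. -/

import Mathlib

open Real

/-!
`f` splits along the two parity sectors `{p, q}` and `{r, s}`: each sector contributes its total
mass times the binary entropy (in bits) of the conditional distribution inside it. A binary
entropy is at most one bit, with equality at `1/2`, and the masses sum to `1`; if some `xᵢ` is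
`0` or `1`, each sector carries a single outcome and so has zero entropy.
-/

namespace FermionEntropyReal

/-- `f(x₁,x₂)` is the two-fermion PSSR entanglement entropy as a function of
the real occupation probabilities `x₁ = |r₁|²`, `x₂ = |r₂|²`, with
`p = x₁x₂`, `q = (1−x₁)(1−x₂)`, `r = x₁(1−x₂)`, `s = (1−x₁)x₂`. Terms of the
form `0 · log₂(0/c)` are automatically `0`. -/
noncomputable def f (x₁ x₂ : ℝ) : ℝ :=
  let p := x₁ * x₂
  let q := (1 - x₁) * (1 - x₂)
  let r := x₁ * (1 - x₂)
  let s := (1 - x₁) * x₂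
  (- (p * Real.logb 2 (p / (p + q))) - q * Real.logb 2 (q / (p + q))
    - r * Real.logb 2 (r / (r + s)) - s * Real.logb 2 (s / (r + s)))

noncomputable def pairEntropy (a b : ℝ) : ℝ :=
  -(a * logb 2 (a / (a + b))) - b * logb 2 (b / (a + b))

lemma pairEntropy_eq_mul_binEntropy (a b : ℝ) :
    pairEntropy a b = (a + b) * binEntropy (a / (a + b)) / log 2 := by
  rcases eq_or_ne (a + b) 0 with h | h
  · simp [pairEntropy, h]
  have hb : 1 - a / (a + b) = b / (a + b) := by field_simp; ring
  rw [binEntropy, hb, log_inv, log_inv, pairEntropy, logb, logb]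
  field_simp
  ring

lemma pairEntropy_le_add {a b : ℝ} (ha : 0 ≤ a) (hb : 0 ≤ b) : pairEntropy a b ≤ a + b := by
  rw [pairEntropy_eq_mul_binEntropy, div_le_iff₀ (log_pos one_lt_two)]
  exact mul_le_mul_of_nonneg_left binEntropy_le_log_two (add_nonneg ha hb)

@[simp] lemma pairEntropy_zero_left (b : ℝ) : pairEntropy 0 b = 0 := by
  simp [pairEntropy_eq_mul_binEntropy]

@[simp] lemma pairEntropy_zero_right (a : ℝ) : pairEntropy a 0 = 0 := by
  rcases eq_or_ne a 0 with rfl | h <;> simp [pairEntropy_eq_mul_binEntropy, *]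

lemma pairEntropy_self (a : ℝ) : pairEntropy a a = 2 * a := by
  rcases eq_or_ne a 0 with rfl | h
  · simp
  rw [pairEntropy_eq_mul_binEntropy, ← two_mul, div_mul_cancel_right₀ h, binEntropy_two_inv,
    mul_div_cancel_right₀ _ (log_pos one_lt_two).ne']

lemma f_eq_pairEntropy_add (x₁ x₂ : ℝ) :
    f x₁ x₂ = pairEntropy (x₁ * x₂) ((1 - x₁) * (1 - x₂))
      + pairEntropy (x₁ * (1 - x₂)) ((1 - x₁) * x₂) := by
  simp only [f, pairEntropy]
  ring

/-- The real-variable optimization underlying the two-fermion PSSR entropy: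
for `x₁, x₂ ∈ [0,1]`, `f ≤ 1`, with equality at `x₁ = x₂ = 1/2`; and `f = 0`
whenever `x₁ ∈ {0,1}` or `x₂ ∈ {0,1}`. -/
theorem f_max :
    (∀ x₁ x₂ : ℝ, x₁ ∈ Set.Icc (0:ℝ) 1 → x₂ ∈ Set.Icc (0:ℝ) 1 →
      f x₁ x₂ ≤ 1) ∧
    f (1/2) (1/2) = 1 ∧
    (∀ x₁ x₂ : ℝ, x₁ ∈ Set.Icc (0:ℝ) 1 → x₂ ∈ Set.Icc (0:ℝ) 1 →
      (x₁ = 0 ∨ x₁ = 1 ∨ x₂ = 0 ∨ x₂ = 1) → f x₁ x₂ = 0) := by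
  refine ⟨fun x₁ x₂ ⟨h₁, h₁'⟩ ⟨h₂, h₂'⟩ => ?_, ?_, fun x₁ x₂ _ _ h => ?_⟩
  · have k₁ : 0 ≤ 1 - x₁ := sub_nonneg.2 h₁'
    have k₂ : 0 ≤ 1 - x₂ := sub_nonneg.2 h₂'
    have hpq := pairEntropy_le_add (mul_nonneg h₁ h₂) (mul_nonneg k₁ k₂)
    have hrs := pairEntropy_le_add (mul_nonneg h₁ k₂) (mul_nonneg k₁ h₂)
    rw [f_eq_pairEntropy_add]
    linarith
  · norm_num [f_eq_pairEntropy_add, pairEntropy_self]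
  · rcases h with rfl | rfl | rfl | rfl <;> simp [f_eq_pairEntropy_add]

end FermionEntropyReal
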